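/- arXiv:1504.08221 — 5 statements merged into one kernel-verified Lean document; each statement's English description precedes it below -/
import Mathlib

section
/- Let A be an N×N reaction matrix all of whose principal (N-1)×(N-1) minors ρ_{ii} are nonzero and all of the same sign (-1)^{N-1}. Then for any M > 0, the vector X_∞ with components u_{j,∞} = M ρ_{jj} / (∑_{i=1}^N ρ_{ii}) is the unique solution of the system A X_∞ = 0 together with ∑_{j=1}^N u_{j,∞} = M, and all components u_{j,∞} are positive. -/
/-!
If the minor `ρ k` obtained by deleting row and column `k` is nonzero, a vector in the kernel
(or left kernel) of `A` that vanishes at `k` is zero, so both kernels are at most lines. Zero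
column sums put the all-ones vector in the left kernel; hence `det A = 0`, each row of `adj A`,
lying in the left kernel, is constant, and each column of `adj A` equals its diagonal `ρ`. Then
`A * adj A = det A • 1 = 0` gives `A ρ = 0`. Normalising `ρ` yields the equilibrium: positive since
all `ρ i` share a sign, unique since `ker A` is a line on which the total mass is nonzero.
-/

open Matrix

namespace Matrix

variable {R : Type*} [CommRing R] {n : ℕ} (A : Matrix (Fin (n + 1)) (Fin (n + 1)) R)

theorem const_one_vecMul_eq_zero_of_sum_col_eq_zero (hcol : ∀ j, ∑ i, A i j = 0) :
    (fun _ => 1 : Fin (n + 1) → R) ᵥ* A = 0 := by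
  funext j
  simpa [vecMul, dotProduct] using hcol j

variable [IsDomain R]

theorem eq_zero_of_mulVec_eq_zero_of_apply_eq_zero {k : Fin (n + 1)}
    (hk : (A.submatrix k.succAbove k.succAbove).det ≠ 0) {v : Fin (n + 1) → R}
    (hv : A *ᵥ v = 0) (hvk : v k = 0) : v = 0 := by
  have hminor : A.submatrix k.succAbove k.succAbove *ᵥ (v ∘ k.succAbove) = 0 := by
    funext i
    have hi := congrFun hv (k.succAbove i)
    simp only [mulVec, dotProduct, Pi.zero_apply] at hi ⊢
    rwa [Fin.sum_univ_succAbove _ k, hvk, mul_zero, zero_add] at hi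
  have hvs := eq_zero_of_mulVec_eq_zero hk hminor
  funext j
  induction j using Fin.succAboveCases k with
  | x => exact hvk
  | p j => exact congrFun hvs j

theorem eq_zero_of_vecMul_eq_zero_of_apply_eq_zero {k : Fin (n + 1)}
    (hk : (A.submatrix k.succAbove k.succAbove).det ≠ 0) {v : Fin (n + 1) → R}
    (hv : v ᵥ* A = 0) (hvk : v k = 0) : v = 0 := by
  refine eq_zero_of_mulVec_eq_zero_of_apply_eq_zero Aᵀ ?_ (by rwa [mulVec_transpose]) hvk
  rwa [← transpose_submatrix, det_transpose]

theorem smul_eq_smul_of_mulVec_eq_zero {k : Fin (n + 1)}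
    (hk : (A.submatrix k.succAbove k.succAbove).det ≠ 0) {v w : Fin (n + 1) → R}
    (hv : A *ᵥ v = 0) (hw : A *ᵥ w = 0) : v k • w = w k • v := by
  rw [← sub_eq_zero]
  refine eq_zero_of_mulVec_eq_zero_of_apply_eq_zero A hk ?_ ?_
  · rw [mulVec_sub, mulVec_smul, mulVec_smul, hv, hw, smul_zero, smul_zero, sub_zero]
  · simp only [Pi.sub_apply, Pi.smul_apply, smul_eq_mul, mul_comm, sub_self]

theorem eq_of_mulVec_eq_zero_of_sum_eq {k : Fin (n + 1)}
    (hk : (A.submatrix k.succAbove k.succAbove).det ≠ 0) {v w : Fin (n + 1) → R}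
    (hv : A *ᵥ v = 0) (hw : A *ᵥ w = 0) (hsum : ∑ i, v i = ∑ i, w i) (hv0 : ∑ i, v i ≠ 0) :
    w = v := by
  have hvw := smul_eq_smul_of_mulVec_eq_zero A hk hv hw
  have hvk_eq : v k = w k := by
    have := congrArg (fun u => ∑ i, u i) hvw
    simp only [Pi.smul_apply, smul_eq_mul, ← Finset.mul_sum, ← hsum] at this
    exact mul_right_cancel₀ hv0 this
  have hvk : v k ≠ 0 := fun h0 =>
    hv0 (by simp [eq_zero_of_mulVec_eq_zero_of_apply_eq_zero A hk hv h0])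
  rw [← hvk_eq] at hvw
  exact smul_right_injective _ hvk hvw

theorem det_eq_zero_of_sum_col_eq_zero (hcol : ∀ j, ∑ i, A i j = 0) : A.det = 0 :=
  exists_vecMul_eq_zero_iff.mp ⟨fun _ => 1, fun h => one_ne_zero (congrFun h 0),
    const_one_vecMul_eq_zero_of_sum_col_eq_zero A hcol⟩

theorem adjugate_apply_eq_of_sum_col_eq_zero (hcol : ∀ j, ∑ i, A i j = 0) {k : Fin (n + 1)}
    (hk : (A.submatrix k.succAbove k.succAbove).det ≠ 0) (i j : Fin (n + 1)) :
    A.adjugate i j = A.adjugate i k := by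
  have hrow : A.adjugate i ᵥ* A = 0 := by
    funext j
    simpa [det_eq_zero_of_sum_col_eq_zero A hcol, mul_apply, vecMul, dotProduct] using
      congrFun (congrFun (adjugate_mul A) i) j
  have := eq_zero_of_vecMul_eq_zero_of_apply_eq_zero A hk
    (v := A.adjugate i - A.adjugate i k • fun _ => 1)
    (by rw [sub_vecMul, smul_vecMul, hrow,
      const_one_vecMul_eq_zero_of_sum_col_eq_zero A hcol, smul_zero, sub_zero]) (by simp)
  simpa [sub_eq_zero] using congrFun this j

theorem mulVec_principalMinors_eq_zero (hcol : ∀ j, ∑ i, A i j = 0) :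
    A *ᵥ (fun i => (A.submatrix i.succAbove i.succAbove).det) = 0 := by
  by_cases h : ∃ k : Fin (n + 1), (A.submatrix k.succAbove k.succAbove).det ≠ 0
  · obtain ⟨k, hk⟩ := h
    have hcolumn :
        (fun i => (A.submatrix i.succAbove i.succAbove).det) = fun i => A.adjugate i k := by
      funext i
      rw [← adjugate_apply_eq_of_sum_col_eq_zero A hcol hk i i, adjugate_fin_succ_eq_det_submatrix,
        Even.neg_one_pow ⟨_, rfl⟩, one_mul]
    rw [hcolumn]
    funext i
    simpa [det_eq_zero_of_sum_col_eq_zero A hcol, mul_apply, mulVec, dotProduct] using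
      congrFun (congrFun (mul_adjugate A) i) k
  · push Not at h
    simp only [h]
    exact mulVec_zero A

end Matrix

theorem div_sum_pos_of_forall_pos_mul {ι K : Type*} [Fintype ι] [Nonempty ι] [Field K]
    [LinearOrder K] [IsStrictOrderedRing K] {c : K} {f : ι → K} (h : ∀ i, 0 < c * f i) (j : ι) :
    0 < f j / ∑ i, f i := by
  have hsum : 0 < c * ∑ i, f i := by
    rw [Finset.mul_sum]
    exact Finset.sum_pos (fun i _ => h i) Finset.univ_nonempty
  have hc : c ≠ 0 := left_ne_zero_of_mul hsum.ne'
  rw [← mul_div_mul_left _ _ hc]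
  exact div_pos (h j) hsum

theorem unique_positive_equilibrium_of_nonzero_minors_general
    (N : ℕ) (A : Matrix (Fin (N + 1)) (Fin (N + 1)) ℝ)
    (hcol : ∀ j, ∑ i, A i j = 0)
    (ρ : Fin (N + 1) → ℝ)
    (hρ : ∀ i, ρ i = (A.submatrix i.succAbove i.succAbove).det)
    (hsign : ∀ i, 0 < (-1 : ℝ) ^ N * ρ i)
    (M : ℝ) (hM : 0 < M)
    (Xinf : Fin (N + 1) → ℝ)
    (hXinf : ∀ j, Xinf j = M * ρ j / ∑ i, ρ i) :
    (∀ j, 0 < Xinf j) ∧ A.mulVec Xinf = 0 ∧ ∑ j, Xinf j = M ∧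
      ∀ Y : Fin (N + 1) → ℝ, A.mulVec Y = 0 → ∑ j, Y j = M → Y = Xinf := by
  have hρ0 : ρ 0 ≠ 0 := fun h => by simpa [h] using hsign 0
  have hsum_ne : ∑ i, ρ i ≠ 0 := fun h => by
    simpa [h] using div_sum_pos_of_forall_pos_mul hsign 0
  have hXρ : Xinf = (M / ∑ i, ρ i) • ρ := by
    funext j
    rw [hXinf, Pi.smul_apply, smul_eq_mul, div_mul_eq_mul_div, mul_div_right_comm]
  have hpos : ∀ j, 0 < Xinf j := fun j => by
    rw [hXinf, mul_div_assoc]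
    exact mul_pos hM (div_sum_pos_of_forall_pos_mul hsign j)
  have hAX : A *ᵥ Xinf = 0 := by
    rw [hXρ, mulVec_smul, funext hρ, mulVec_principalMinors_eq_zero A hcol, smul_zero]
  have hsum : ∑ j, Xinf j = M := by
    simp only [hXinf, ← Finset.sum_div, ← Finset.mul_sum]
    field_simp
  refine ⟨hpos, hAX, hsum, fun Y hY hYsum => ?_⟩
  exact eq_of_mulVec_eq_zero_of_sum_eq A (hρ 0 ▸ hρ0) hAX hY (hsum.trans hYsum.symm)
    (hsum ▸ hM.ne')

theorem unique_positive_equilibrium_of_nonzero_minors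
    (N : ℕ) (A : Matrix (Fin (N + 1)) (Fin (N + 1)) ℝ)
    (hoff : ∀ i j, i ≠ j → 0 ≤ A i j)
    (hcol : ∀ j, ∑ i, A i j = 0)
    (ρ : Fin (N + 1) → ℝ)
    (hρ : ∀ i, ρ i = (A.submatrix i.succAbove i.succAbove).det)
    (hsign : ∀ i, 0 < (-1 : ℝ) ^ N * ρ i)
    (M : ℝ) (hM : 0 < M)
    (Xinf : Fin (N + 1) → ℝ)
    (hXinf : ∀ j, Xinf j = M * ρ j / ∑ i, ρ i) :
    (∀ j, 0 < Xinf j) ∧ A.mulVec Xinf = 0 ∧ ∑ j, Xinf j = M ∧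
      ∀ Y : Fin (N + 1) → ℝ, A.mulVec Y = 0 → ∑ j, Y j = M → Y = Xinf :=
  unique_positive_equilibrium_of_nonzero_minors_general N A hcol ρ hρ hsign M hM Xinf hXinf
end

section
/- Let A be an N×N reaction matrix that is indecomposable. Then all principal (N-1)×(N-1) minors ρ_{ii} of A are nonzero, the rank of A equals N-1, and the kernel of Aᵀ is spanned by the vector (1,1,...,1). -/
/-- `A` is decomposable: some simultaneous permutation of rows and columns brings `A`
into block lower triangular form with two nontrivial square diagonal blocks. -/
def Matrix.IsDecomposable {N : ℕ} (A : Matrix (Fin N) (Fin N) ℝ) : Prop :=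
  ∃ (σ : Equiv.Perm (Fin N)) (k : ℕ), 0 < k ∧ k < N ∧
    ∀ i j : Fin N, (i : ℕ) < k → k ≤ (j : ℕ) → A (σ i) (σ j) = 0


open Finset
lemma decomp_of_split {n : ℕ} (A : Matrix (Fin n) (Fin n) ℝ) (S : Finset (Fin n))
    (hne : S.Nonempty) (hnu : S ≠ univ) (h : ∀ j ∈ S, ∀ i ∉ S, A i j = 0) :
    A.IsDecomposable := by
  classical
  have hcard : Sᶜ.card + S.card = n := by
    rw [Finset.card_compl, Fintype.card_fin]
    have h2 : S.card ≤ n := by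
      simpa using Finset.card_le_card (Finset.subset_univ S)
    omega
  set k := Sᶜ.card with hk
  have hk0 : 0 < k := by
    rw [hk, Finset.card_pos, Finset.nonempty_iff_ne_empty]
    simpa [Finset.compl_eq_empty_iff] using hnu
  have hkn : k < n := by
    have := Finset.card_pos.2 hne
    omega
  let e1 := Sᶜ.orderIsoOfFin rfl
  let e2 := S.orderIsoOfFin rfl
  let ec : {x // x ∈ Sᶜ} ≃ {x : Fin n // ¬ x ∈ S} :=
    Equiv.subtypeEquivRight (fun x => Finset.mem_compl)
  let σ : Equiv.Perm (Fin n) :=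
    (finCongr hcard.symm).trans (finSumFinEquiv.symm.trans
      ((Equiv.sumCongr (e1.toEquiv.trans ec) e2.toEquiv).trans
        ((Equiv.sumComm _ _).trans (Equiv.sumCompl (· ∈ S)))))
  have hlt : ∀ i : Fin n, (i : ℕ) < k → σ i ∉ S := by
    intro i hi
    have h1 : finCongr hcard.symm i = Fin.castAdd S.card ⟨(i : ℕ), hi⟩ := by
      apply Fin.ext; simp
    simp only [σ, Equiv.trans_apply, h1, finSumFinEquiv_symm_apply_castAdd,
      Equiv.sumCongr_apply, Sum.map_inl, Equiv.sumComm_apply, Sum.swap_inl,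
      Equiv.sumCompl_apply_inr]
    exact (ec (e1.toEquiv ⟨(i : ℕ), hi⟩)).2
  have hge : ∀ j : Fin n, k ≤ (j : ℕ) → σ j ∈ S := by
    intro j hj
    have hjk : (j : ℕ) - k < S.card := by omega
    have h1 : finCongr hcard.symm j = Fin.natAdd k ⟨(j : ℕ) - k, hjk⟩ := by
      apply Fin.ext; simp; omega
    simp only [σ, Equiv.trans_apply, h1, finSumFinEquiv_symm_apply_natAdd,
      Equiv.sumCongr_apply, Sum.map_inr, Equiv.sumComm_apply, Sum.swap_inr,
      Equiv.sumCompl_apply_inl]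
    exact (e2.toEquiv ⟨(j : ℕ) - k, hjk⟩).2
  exact ⟨σ, k, hk0, hkn, fun i j hi hj => h (σ j) (hge j hj) (σ i) (hlt i hi)⟩

lemma max_principle (N : ℕ) (A : Matrix (Fin (N + 1)) (Fin (N + 1)) ℝ)
    (hoff : ∀ i j, i ≠ j → 0 ≤ A i j)
    (hcol : ∀ j, ∑ i, A i j = 0)
    (hind : ¬ Matrix.IsDecomposable A)
    (x : Fin (N + 1) → ℝ) (M : ℝ) (hM : ∀ i, x i ≤ M)
    (heq : ∀ j, x j = M → ∑ i, A i j * x i = 0)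
    (hex : ∃ j, x j = M) : ∀ i, x i = M := by
  classical
  by_contra hcon
  push_neg at hcon
  obtain ⟨i0, hi0⟩ := hcon
  set S : Finset (Fin (N + 1)) := univ.filter (fun i => x i = M) with hS
  apply hind
  apply decomp_of_split A S
  · obtain ⟨j, hj⟩ := hex
    exact ⟨j, by simp [hS, hj]⟩
  · intro hU
    have : i0 ∈ S := by rw [hU]; exact mem_univ i0
    exact hi0 (by simpa [hS] using this)
  · intro j hjS i hiS
    have hj : x j = M := by simpa [hS] using hjS
    have hi : x i ≠ M := by simpa [hS] using hiS
    have key : ∑ m, A m j * (x m - M) = 0 := by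
      have e : ∑ m, A m j * (x m - M) = (∑ m, A m j * x m) - M * ∑ m, A m j := by
        rw [Finset.mul_sum, ← Finset.sum_sub_distrib]
        congr 1; ext m; ring
      rw [e, heq j hj, hcol j]; ring
    have hnp : ∀ m ∈ univ, A m j * (x m - M) ≤ 0 := by
      intro m _
      rcases eq_or_ne m j with rfl | hmj
      · simp [hj]
      · exact mul_nonpos_of_nonneg_of_nonpos (hoff m j hmj) (by linarith [hM m])
    have h0 := (Finset.sum_eq_zero_iff_of_nonpos hnp).1 key i (mem_univ i)
    rcases mul_eq_zero.1 h0 with h | h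
    · exact h
    · exact absurd h (sub_ne_zero.2 hi)

theorem indecomposable_reaction_matrix_minors_rank_kernel
    (N : ℕ) (A : Matrix (Fin (N + 1)) (Fin (N + 1)) ℝ)
    (hoff : ∀ i j, i ≠ j → 0 ≤ A i j)
    (hcol : ∀ j, ∑ i, A i j = 0)
    (hind : ¬ Matrix.IsDecomposable A) :
    (∀ i : Fin (N + 1), (A.submatrix i.succAbove i.succAbove).det ≠ 0) ∧
    A.rank = N ∧
    (∀ x : Fin (N + 1) → ℝ, A.transpose.mulVec x = 0 ↔ ∃ c : ℝ, x = fun _ => c) := by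
  classical
  -- Part 3 : kernel of A.transpose
  have hker : ∀ x : Fin (N + 1) → ℝ,
      A.transpose.mulVec x = 0 ↔ ∃ c : ℝ, x = fun _ => c := by
    intro x
    constructor
    · intro hx
      set M : ℝ := univ.sup' ⟨0, mem_univ 0⟩ x with hMdef
      have hM : ∀ i, x i ≤ M := fun i => Finset.le_sup' x (mem_univ i)
      obtain ⟨j0, _, hj0⟩ := Finset.exists_mem_eq_sup' ⟨0, mem_univ 0⟩ x
      have heq : ∀ j, x j = M → ∑ i, A i j * x i = 0 := by
        intro j _
        have := congrFun hx j
        simpa [Matrix.mulVec, dotProduct, Matrix.transpose_apply] using this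
      have := max_principle N A hoff hcol hind x M hM heq ⟨j0, hj0.symm⟩
      exact ⟨M, funext this⟩
    · rintro ⟨c, rfl⟩
      funext j
      have : ∑ i, A i j * c = 0 := by
        rw [← Finset.sum_mul, hcol j, zero_mul]
      simpa [Matrix.mulVec, dotProduct, Matrix.transpose_apply] using this
  -- Part 1 : principal minors
  have hminor : ∀ k : Fin (N + 1), (A.submatrix k.succAbove k.succAbove).det ≠ 0 := by
    intro k hdet
    set B := A.submatrix k.succAbove k.succAbove with hB
    have hdetT : B.transpose.det = 0 := by rw [Matrix.det_transpose]; exact hdet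
    obtain ⟨y, hy0, hyv⟩ := Matrix.exists_mulVec_eq_zero_iff.2 hdetT
    -- extension of y by 0 at position k
    have L : ∀ z : Fin (N + 1) → ℝ, (∀ j, j ≠ k → ∑ i, A i j * z i = 0) →
        z k = 0 → ∀ i, z i ≤ 0 := by
      intro z hz hzk i
      by_contra hpos
      push_neg at hpos
      set M : ℝ := univ.sup' ⟨0, mem_univ 0⟩ z with hMdef
      have hM : ∀ m, z m ≤ M := fun m => Finset.le_sup' z (mem_univ m)
      have hMpos : 0 < M := lt_of_lt_of_le hpos (hM i)
      obtain ⟨j0, _, hj0⟩ := Finset.exists_mem_eq_sup' ⟨0, mem_univ 0⟩ z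
      have heq : ∀ j, z j = M → ∑ i, A i j * z i = 0 := by
        intro j hj
        apply hz
        intro hjk
        rw [hjk, hzk] at hj
        exact absurd hj (ne_of_gt hMpos).symm
      have hall := max_principle N A hoff hcol hind z M hM heq ⟨j0, hj0.symm⟩
      have := hall k
      rw [hzk] at this
      exact absurd this (ne_of_gt hMpos).symm
    set x : Fin (N + 1) → ℝ := k.insertNth 0 y with hx
    have hxk : x k = 0 := by rw [hx]; simp
    have hxs : ∀ m, x (k.succAbove m) = y m := by
      intro m; rw [hx]; simp
    have heqs : ∀ j, j ≠ k → ∑ i, A i j * x i = 0 := by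
      intro j hj
      obtain ⟨m, rfl⟩ := Fin.exists_succAbove_eq hj
      rw [Fin.sum_univ_succAbove (fun i => A i (k.succAbove m) * x i) k]
      have hBv := congrFun hyv m
      have : ∑ m' : Fin N, B.transpose m m' * y m' = 0 := by
        simpa [Matrix.mulVec, dotProduct] using hBv
      rw [hxk, mul_zero, zero_add]
      calc ∑ m' : Fin N, A (k.succAbove m') (k.succAbove m) * x (k.succAbove m')
          = ∑ m' : Fin N, B.transpose m m' * y m' := by
            apply Finset.sum_congr rfl
            intro m' _
            rw [hxs m']
            rfl
        _ = 0 := this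
    have hneqs : ∀ j, j ≠ k → ∑ i, A i j * (-x) i = 0 := by
      intro j hj
      have := heqs j hj
      simp only [Pi.neg_apply, mul_neg, Finset.sum_neg_distrib]
      rw [this, neg_zero]
    obtain ⟨m, hm⟩ := Function.ne_iff.1 hy0
    have h1 : x (k.succAbove m) ≤ 0 := L x heqs hxk _
    have h2 : (-x) (k.succAbove m) ≤ 0 := L (-x) hneqs (by simp [hxk]) _
    rw [hxs] at h1
    simp only [Pi.neg_apply, hxs, neg_nonpos] at h2
    exact hm (le_antisymm h1 h2)
  refine ⟨hminor, ?_, hker⟩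
  -- Part 2 : rank
  have hkereq : LinearMap.ker A.transpose.mulVecLin =
      Submodule.span ℝ {(fun _ => (1 : ℝ) : Fin (N + 1) → ℝ)} := by
    ext x
    rw [LinearMap.mem_ker, Matrix.mulVecLin_apply, Submodule.mem_span_singleton, hker x]
    constructor
    · rintro ⟨c, rfl⟩
      exact ⟨c, funext fun i => by simp⟩
    · rintro ⟨c, rfl⟩
      exact ⟨c, funext fun i => by simp⟩
  have hone : (fun _ => (1 : ℝ) : Fin (N + 1) → ℝ) ≠ 0 := by
    intro h
    have := congrFun h 0
    norm_num at this
  have hkdim : Module.finrank ℝ (LinearMap.ker A.transpose.mulVecLin) = 1 := by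
    rw [hkereq]
    exact finrank_span_singleton hone
  have hrn := LinearMap.finrank_range_add_finrank_ker (A.transpose.mulVecLin)
  rw [hkdim] at hrn
  have hpi : Module.finrank ℝ (Fin (N + 1) → ℝ) = N + 1 := by
    simp [Module.finrank_pi]
  rw [hpi] at hrn
  have : A.transpose.rank = N := by
    rw [Matrix.rank]
    omega
  rw [← Matrix.rank_transpose]
  exact this
end

section
/- Consider the linear ODE system X' = AX where A is an N×N reaction matrix, and let X_∞ = (u_{1,∞},...,u_{N,∞}) be a positive vector with A X_∞ = 0. For a solution X(t) = (u_1(t),...,u_N(t)), the quadratic relative entropy E(t) = ∑_{i=1}^N u_i(t)² / u_{i,∞} satisfies dE/dt = - ∑_{1 ≤ i < j ≤ N} (a_{ij} u_{j,∞} + a_{ji} u_{i,∞}) (u_i/u_{i,∞} - u_j/u_{j,∞})². In particular E is nonincreasing. -/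
/-!
Write `y = X / X∞` and `B = A * diagonal X∞`. Then `A X = B y`, so the energy has derivative
`2 yᵀ B y`. The equilibrium `A X∞ = 0` and the vanishing column sums of `A` make every row and
column sum of `B` vanish, hence `2 yᵀ B y = -∑ᵢⱼ Bᵢⱼ (yᵢ - yⱼ)²`; grouping `(i, j)` with `(j, i)`
gives the sum over `i < j`, whose coefficients are nonnegative because `A` is off-diagonal
nonnegative.
-/

open Finset Matrix

section

variable {ι : Type*} [Fintype ι]

theorem sum_sum_eq_sum_lt_add_sum_diag {M : Type*} [LinearOrder ι] [AddCommMonoid M]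
    (f : ι → ι → M) :
    ∑ i, ∑ j, f i j = ∑ i, ∑ j ∈ univ.filter (fun j => i < j), (f i j + f j i) + ∑ i, f i i := by
  have trichotomy : ∀ i j, f i j =
      ((if i < j then f i j else 0) + if j < i then f i j else 0) + if i = j then f i j else 0 := by
    intro i j
    rcases lt_trichotomy i j with h | rfl | h
    · simp [h, h.not_gt, h.ne]
    · simp
    · simp [h, h.not_gt, h.ne']
  have swap : ∑ i, ∑ j, (if j < i then f i j else 0) = ∑ i, ∑ j, if i < j then f j i else 0 :=
    sum_comm
  conv_lhs => enter [2, i, 2, j]; rw [trichotomy i j]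
  simp only [sum_add_distrib]
  rw [swap]
  simp only [sum_ite_eq, mem_univ, if_true, ← sum_filter]

theorem sum_sum_mul_sub_sq_eq_neg_two_dotProduct_mulVec {R : Type*} [CommRing R]
    (B : Matrix ι ι R) (hrow : ∀ i, ∑ j, B i j = 0) (hcol : ∀ j, ∑ i, B i j = 0) (y : ι → R) :
    ∑ i, ∑ j, B i j * (y i - y j) ^ 2 = -(2 * (y ⬝ᵥ B *ᵥ y)) := by
  have expand : ∀ i j, B i j * (y i - y j) ^ 2 =
      y i ^ 2 * B i j + y j ^ 2 * B i j - 2 * (y i * (B i j * y j)) := fun i j => by ring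
  have hrow' : ∑ i, ∑ j, y i ^ 2 * B i j = 0 := by simp [← mul_sum, hrow]
  have hcol' : ∑ i, ∑ j, y j ^ 2 * B i j = 0 := by rw [sum_comm]; simp [← mul_sum, hcol]
  simp only [expand, sum_sub_distrib, sum_add_distrib]
  rw [hrow', hcol']
  simp [dotProduct, mulVec, mul_sum]

theorem sum_lt_mul_sub_sq_eq_neg_two_dotProduct_mulVec [LinearOrder ι] {R : Type*} [CommRing R]
    (B : Matrix ι ι R) (hrow : ∀ i, ∑ j, B i j = 0) (hcol : ∀ j, ∑ i, B i j = 0) (y : ι → R) :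
    ∑ i, ∑ j ∈ univ.filter (fun j => i < j), (B i j + B j i) * (y i - y j) ^ 2
      = -(2 * (y ⬝ᵥ B *ᵥ y)) := by
  rw [← sum_sum_mul_sub_sq_eq_neg_two_dotProduct_mulVec B hrow hcol, sum_sum_eq_sum_lt_add_sum_diag]
  simp only [sub_self, zero_pow two_ne_zero, mul_zero, sum_const_zero, add_zero]
  exact sum_congr rfl fun i _ => sum_congr rfl fun j _ => by ring

theorem mul_diagonal_mulVec_div {m K : Type*} [Field K] [DecidableEq ι] {w : ι → K}
    (hw : ∀ i, w i ≠ 0) (A : Matrix m ι K) (x : ι → K) :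
    (A * diagonal w) *ᵥ (x / w) = A *ᵥ x := by
  rw [← mulVec_mulVec]
  congr 1
  ext i
  rw [mulVec_diagonal, Pi.div_apply, mul_div_cancel₀ _ (hw i)]

theorem hasDerivAt_sum_sq_div {X : ℝ → ι → ℝ} {X' : ι → ℝ} {t : ℝ} (w : ι → ℝ)
    (hX : ∀ i, HasDerivAt (fun s => X s i) (X' i) t) :
    HasDerivAt (fun s => ∑ i, X s i ^ 2 / w i) (2 * ((X t / w) ⬝ᵥ X')) t := by
  have h : HasDerivAt (fun s => ∑ i, X s i ^ 2 / w i) (∑ i, 2 * X t i * X' i / w i) t :=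
    HasDerivAt.fun_sum fun i _ => by simpa using ((hX i).fun_pow 2).div_const (w i)
  convert h using 1
  simp only [dotProduct, mul_sum, Pi.div_apply]
  exact sum_congr rfl fun i _ => by ring

end

theorem relative_entropy_dissipation_ode
    (N : ℕ) (A : Matrix (Fin N) (Fin N) ℝ)
    (hoff : ∀ i j, i ≠ j → 0 ≤ A i j)
    (hcol : ∀ j, ∑ i, A i j = 0)
    (Xinf : Fin N → ℝ) (hXinf : ∀ i, 0 < Xinf i) (heq : A.mulVec Xinf = 0)
    (X : ℝ → Fin N → ℝ)
    (hX : ∀ i t, HasDerivAt (fun s => X s i) ((A.mulVec (X t)) i) t) :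
    (∀ t, HasDerivAt (fun s => ∑ i, (X s i) ^ 2 / Xinf i)
      (-(∑ i, ∑ j ∈ Finset.univ.filter (fun j => i < j),
          (A i j * Xinf j + A j i * Xinf i) * (X t i / Xinf i - X t j / Xinf j) ^ 2)) t) ∧
    Antitone (fun t => ∑ i, (X t i) ^ 2 / Xinf i) := by
  set B := A * diagonal Xinf
  have hB_row : ∀ i, ∑ j, B i j = 0 := fun i => by
    simpa [B, mul_diagonal, mulVec, dotProduct] using congrFun heq i
  have hB_col : ∀ j, ∑ i, B i j = 0 := fun j => by
    simp [B, mul_diagonal, ← sum_mul, hcol]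
  have hderiv : ∀ t, HasDerivAt (fun s => ∑ i, (X s i) ^ 2 / Xinf i)
      (-(∑ i, ∑ j ∈ Finset.univ.filter (fun j => i < j),
          (A i j * Xinf j + A j i * Xinf i) * (X t i / Xinf i - X t j / Xinf j) ^ 2)) t := fun t => by
    convert hasDerivAt_sum_sq_div Xinf (hX · t) using 1
    rw [← mul_diagonal_mulVec_div (fun i => (hXinf i).ne'), neg_eq_iff_eq_neg,
      ← sum_lt_mul_sub_sq_eq_neg_two_dotProduct_mulVec B hB_row hB_col]
    simp [B, mul_diagonal]
  refine ⟨hderiv, antitone_of_hasDerivAt_nonpos hderiv fun t => neg_nonpos.2 ?_⟩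
  refine sum_nonneg fun i _ => sum_nonneg fun j hj => ?_
  have hij : i < j := (mem_filter.1 hj).2
  exact mul_nonneg (add_nonneg (mul_nonneg (hoff i j hij.ne) (hXinf j).le)
    (mul_nonneg (hoff j i hij.ne') (hXinf i).le)) (sq_nonneg _)
end

section
/- Let A be an N×N reaction matrix whose associated directed graph (edge j → i iff a_{ij} > 0) is strongly connected, and let u_{1,∞},...,u_{N,∞} > 0. Then there exists ξ > 0 such that for all w ∈ ℝ^N: ∑_{1 ≤ i < j ≤ N} (a_{ij} u_{j,∞} + a_{ji} u_{i,∞}) (w_i/u_{i,∞} - w_j/u_{j,∞})² ≥ ξ ∑_{1 ≤ i < j ≤ N} (w_i/u_{i,∞} - w_j/u_{j,∞})². -/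
/-!
Both sides are quadratic forms in `v i = w i / uinf i`; the left one has the weights
`c i j = A i j * uinf j + A j i * uinf i ≥ 0`, which are positive along every edge of the graph.
Along an edge `a → b` the square `(v a - v b) ^ 2` is bounded by the left side divided by
`c a b`, and `(x + y) ^ 2 ≤ 2 x ^ 2 + 2 y ^ 2` propagates such bounds along paths. Strong
connectivity gives a path between any two indices, so every `(v i - v j) ^ 2`, and hence their
sum, is bounded by a fixed multiple of the left side.
-/

open Finset Relation

section SqSubBounded

variable {ι : Type*} {Q : (ι → ℝ) → ℝ} {x y z : ι}

def SqSubBoundedBy (Q : (ι → ℝ) → ℝ) (x y : ι) : Prop :=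
  ∃ C ≥ 0, ∀ v : ι → ℝ, (v x - v y) ^ 2 ≤ C * Q v

lemma SqSubBoundedBy.refl (Q : (ι → ℝ) → ℝ) (x : ι) : SqSubBoundedBy Q x x :=
  ⟨0, le_rfl, fun v => by simp⟩

lemma SqSubBoundedBy.trans (hxy : SqSubBoundedBy Q x y) (hyz : SqSubBoundedBy Q y z) :
    SqSubBoundedBy Q x z := by
  obtain ⟨C₁, hC₁, h₁⟩ := hxy
  obtain ⟨C₂, hC₂, h₂⟩ := hyz
  refine ⟨2 * C₁ + 2 * C₂, by positivity, fun v => ?_⟩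
  nlinarith [h₁ v, h₂ v, sq_nonneg (v x - 2 * v y + v z)]

lemma SqSubBoundedBy.of_mul_le {c : ℝ} (hc : 0 < c)
    (h : ∀ v : ι → ℝ, c * (v x - v y) ^ 2 ≤ Q v) :
    SqSubBoundedBy Q x y :=
  ⟨c⁻¹, (inv_pos.2 hc).le, fun v => (le_inv_mul_iff₀ hc).2 (h v)⟩

lemma SqSubBoundedBy.of_reflTransGen {r : ι → ι → Prop}
    (hr : ∀ a b, r a b → SqSubBoundedBy Q a b)
    (h : ReflTransGen r x y) : SqSubBoundedBy Q x y := by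
  induction h with
  | refl => exact .refl Q x
  | tail _ hbc ih => exact ih.trans (hr _ _ hbc)

end SqSubBounded

section PairSum

variable {ι : Type*} [Fintype ι] [LinearOrder ι]

def pairSum (f : ι → ι → ℝ) : ℝ :=
  ∑ i, ∑ j ∈ univ.filter (fun j => i < j), f i j

def dirichletForm (c : ι → ι → ℝ) (v : ι → ℝ) : ℝ :=
  pairSum fun i j => c i j * (v i - v j) ^ 2

lemma pairSum_nonneg {f : ι → ι → ℝ} (hf : ∀ i j, i < j → 0 ≤ f i j) : 0 ≤ pairSum f :=
  sum_nonneg fun i _ => sum_nonneg fun j hj => hf i j (mem_filter.mp hj).2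

lemma pairSum_mono {f g : ι → ι → ℝ} (h : ∀ i j, i < j → f i j ≤ g i j) :
    pairSum f ≤ pairSum g :=
  sum_le_sum fun i _ => sum_le_sum fun j hj => h i j (mem_filter.mp hj).2

lemma pairSum_mul_const (f : ι → ι → ℝ) (a : ℝ) :
    pairSum (fun i j => f i j * a) = pairSum f * a := by
  simp only [pairSum, sum_mul]

lemma le_pairSum {f : ι → ι → ℝ} (hf : ∀ i j, i < j → 0 ≤ f i j) {i j : ι}
    (hij : i < j) :
    f i j ≤ pairSum f :=
  calc f i j ≤ ∑ j' ∈ univ.filter (fun j' => i < j'), f i j' :=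
        single_le_sum (fun j' hj' => hf i j' (mem_filter.mp hj').2)
          (mem_filter.mpr ⟨mem_univ _, hij⟩)
    _ ≤ pairSum f :=
        single_le_sum (f := fun i => ∑ j' ∈ univ.filter (fun j' => i < j'), f i j')
          (fun i' _ => sum_nonneg fun j' hj' => hf i' j' (mem_filter.mp hj').2) (mem_univ i)

lemma le_pairSum_of_symm {f : ι → ι → ℝ} (hf_symm : ∀ i j, f i j = f j i)
    (hf : ∀ i j, i < j → 0 ≤ f i j) {i j : ι} (hij : i ≠ j) : f i j ≤ pairSum f := by
  rcases hij.lt_or_gt with h | h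
  · exact le_pairSum hf h
  · exact hf_symm i j ▸ le_pairSum hf h

lemma dirichletForm_nonneg {c : ι → ι → ℝ} (hc : ∀ i j, i < j → 0 ≤ c i j) (v : ι → ℝ) :
    0 ≤ dirichletForm c v :=
  pairSum_nonneg fun i j hij => mul_nonneg (hc i j hij) (sq_nonneg _)

lemma mul_sq_sub_le_dirichletForm {c : ι → ι → ℝ} (hc_symm : ∀ i j, c i j = c j i)
    (hc_nonneg : ∀ i j, i < j → 0 ≤ c i j) {a b : ι} (hab : a ≠ b) (v : ι → ℝ) :
    c a b * (v a - v b) ^ 2 ≤ dirichletForm c v :=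
  le_pairSum_of_symm (f := fun i j => c i j * (v i - v j) ^ 2)
    (fun i j => by rw [hc_symm, ← neg_sub, neg_sq])
    (fun i j hij => mul_nonneg (hc_nonneg i j hij) (sq_nonneg _)) hab

lemma exists_pairSum_sq_sub_le {Q : (ι → ℝ) → ℝ} (hQ : ∀ v, 0 ≤ Q v)
    (h : ∀ x y : ι, SqSubBoundedBy Q x y) :
    ∃ K > 0, ∀ v : ι → ℝ, pairSum (fun i j => (v i - v j) ^ 2) ≤ K * Q v := by
  choose C hC₀ hC using h
  have hK : 0 ≤ pairSum C := pairSum_nonneg fun i j _ => hC₀ i j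
  refine ⟨pairSum C + 1, by linarith, fun v => ?_⟩
  calc pairSum (fun i j => (v i - v j) ^ 2) ≤ pairSum (fun i j => C i j * Q v) :=
        pairSum_mono fun i j _ => hC i j v
    _ = pairSum C * Q v := pairSum_mul_const C (Q v)
    _ ≤ (pairSum C + 1) * Q v := by nlinarith [hQ v]

theorem exists_pos_mul_pairSum_sq_sub_le_dirichletForm (c : ι → ι → ℝ)
    (hc_symm : ∀ i j, c i j = c j i) (hc_nonneg : ∀ i j, i < j → 0 ≤ c i j)
    (hconn : ∀ x y, ReflTransGen (fun a b => a ≠ b ∧ 0 < c a b) x y) :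
    ∃ ξ > 0, ∀ v : ι → ℝ,
      ξ * pairSum (fun i j => (v i - v j) ^ 2) ≤ dirichletForm c v := by
  have hedge : ∀ a b, a ≠ b ∧ 0 < c a b → SqSubBoundedBy (dirichletForm c) a b :=
    fun a b ⟨hab, hc⟩ => .of_mul_le hc (mul_sq_sub_le_dirichletForm hc_symm hc_nonneg hab)
  obtain ⟨K, hK, hbound⟩ := exists_pairSum_sq_sub_le (dirichletForm_nonneg hc_nonneg)
    fun x y => .of_reflTransGen hedge (hconn x y)
  exact ⟨K⁻¹, inv_pos.2 hK, fun v => (inv_mul_le_iff₀ hK).2 (hbound v)⟩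

end PairSum

theorem dissipation_dominates_all_pairs_of_strongly_connected_general
    (N : ℕ) (A : Matrix (Fin N) (Fin N) ℝ)
    (hoff : ∀ i j, i ≠ j → 0 ≤ A i j)
    (hconn : ∀ u v : Fin N, Relation.ReflTransGen (fun x y => x ≠ y ∧ 0 < A y x) u v)
    (uinf : Fin N → ℝ) (huinf : ∀ i, 0 < uinf i) :
    ∃ ξ > 0, ∀ w : Fin N → ℝ,
      ∑ i, ∑ j ∈ Finset.univ.filter (fun j => i < j),
          (A i j * uinf j + A j i * uinf i) * (w i / uinf i - w j / uinf j) ^ 2 ≥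
        ξ * ∑ i, ∑ j ∈ Finset.univ.filter (fun j => i < j),
          (w i / uinf i - w j / uinf j) ^ 2 := by
  set c : Fin N → Fin N → ℝ := fun i j => A i j * uinf j + A j i * uinf i
  have hc_nonneg : ∀ i j, i < j → 0 ≤ c i j := fun i j hij =>
    add_nonneg (mul_nonneg (hoff i j hij.ne) (huinf j).le)
      (mul_nonneg (hoff j i hij.ne') (huinf i).le)
  have hedge : ∀ a b, a ≠ b ∧ 0 < A b a → a ≠ b ∧ 0 < c a b := fun a b ⟨hab, hA⟩ =>
    ⟨hab, add_pos_of_nonneg_of_pos (mul_nonneg (hoff a b hab) (huinf b).le)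
      (mul_pos hA (huinf a))⟩
  obtain ⟨ξ, hξ, hbound⟩ := exists_pos_mul_pairSum_sq_sub_le_dirichletForm c
    (fun i j => add_comm _ _) hc_nonneg fun x y => ReflTransGen.mono hedge x y (hconn x y)
  exact ⟨ξ, hξ, fun w => hbound fun i => w i / uinf i⟩

theorem dissipation_dominates_all_pairs_of_strongly_connected
    (N : ℕ) (A : Matrix (Fin N) (Fin N) ℝ)
    (hoff : ∀ i j, i ≠ j → 0 ≤ A i j)
    (hcol : ∀ j, ∑ i, A i j = 0)
    (hconn : ∀ u v : Fin N, Relation.ReflTransGen (fun x y => x ≠ y ∧ 0 < A y x) u v)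
    (uinf : Fin N → ℝ) (huinf : ∀ i, 0 < uinf i) :
    ∃ ξ > 0, ∀ w : Fin N → ℝ,
      ∑ i, ∑ j ∈ Finset.univ.filter (fun j => i < j),
          (A i j * uinf j + A j i * uinf i) * (w i / uinf i - w j / uinf j) ^ 2 ≥
        ξ * ∑ i, ∑ j ∈ Finset.univ.filter (fun j => i < j),
          (w i / uinf i - w j / uinf j) ^ 2 :=
  dissipation_dominates_all_pairs_of_strongly_connected_general N A hoff hconn uinf huinf
end

section
/- Let A be an N×N reaction matrix with strongly connected associated graph and let X_∞ > 0 satisfy A X_∞ = 0. Then there exists an explicit λ > 0 such that for every vector W ∈ ℝ^N with ∑_i w_i = 0: ∑_{1 ≤ i < j ≤ N} (a_{ij} u_{j,∞} + a_{ji} u_{i,∞}) (w_i/u_{i,∞} - w_j/u_{j,∞})² ≥ λ ∑_{i=1}^N w_i²/u_{i,∞}. (Finite-dimensional entropy–entropy dissipation inequality.) -/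
open Finset

theorem finite_dimensional_entropy_entropy_dissipation
    (N : ℕ) (A : Matrix (Fin N) (Fin N) ℝ)
    (hoff : ∀ i j, i ≠ j → 0 ≤ A i j)
    (hcol : ∀ j, ∑ i, A i j = 0)
    (hconn : ∀ u v : Fin N, Relation.ReflTransGen (fun x y => x ≠ y ∧ 0 < A y x) u v)
    (Xinf : Fin N → ℝ) (hXinf : ∀ i, 0 < Xinf i) (heq : A.mulVec Xinf = 0) :
    ∃ lam > 0, ∀ w : Fin N → ℝ, ∑ i, w i = 0 →
      ∑ i, ∑ j ∈ Finset.univ.filter (fun j => i < j),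
          (A i j * Xinf j + A j i * Xinf i) * (w i / Xinf i - w j / Xinf j) ^ 2 ≥
        lam * ∑ i, (w i) ^ 2 / Xinf i := by
  classical
  have hcnonneg : ∀ i j : Fin N, i ≠ j → 0 ≤ A i j * Xinf j + A j i * Xinf i := by
    intro i j hij
    have h1 := mul_nonneg (hoff i j hij) (hXinf j).le
    have h2 := mul_nonneg (hoff j i (Ne.symm hij)) (hXinf i).le
    linarith
  set D : (Fin N → ℝ) → ℝ := fun v => ∑ i, ∑ j ∈ univ.filter (fun j => i < j),
      (A i j * Xinf j + A j i * Xinf i) * (v i - v j) ^ 2 with hDdef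
  have hDnonneg : ∀ v, 0 ≤ D v := by
    intro v
    apply Finset.sum_nonneg; intro i _
    apply Finset.sum_nonneg; intro j hj
    exact mul_nonneg (hcnonneg i j (mem_filter.mp hj).2.ne) (sq_nonneg _)
  have hDconst : ∀ v, D v = 0 → ∀ x y, v x = v y := by
    intro v hv x y
    have h1 : ∀ i ∈ (univ : Finset (Fin N)), ∑ j ∈ univ.filter (fun j => i < j),
        (A i j * Xinf j + A j i * Xinf i) * (v i - v j) ^ 2 = 0 :=
      (Finset.sum_eq_zero_iff_of_nonneg (fun i _ => Finset.sum_nonneg fun j hj =>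
        mul_nonneg (hcnonneg i j (mem_filter.mp hj).2.ne) (sq_nonneg _))).mp hv
    have h2 : ∀ i j : Fin N, i < j →
        (A i j * Xinf j + A j i * Xinf i) * (v i - v j) ^ 2 = 0 := by
      intro i j hij
      exact (Finset.sum_eq_zero_iff_of_nonneg (fun j hj =>
        mul_nonneg (hcnonneg i j (mem_filter.mp hj).2.ne) (sq_nonneg _))).mp
        (h1 i (mem_univ i)) j (mem_filter.mpr ⟨mem_univ j, hij⟩)
    have hstep : ∀ a b : Fin N, a ≠ b → 0 < A b a → v a = v b := by
      intro a b hab hA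
      rcases lt_trichotomy a b with h | h | h
      · have h0 := h2 a b h
        have hc : 0 < A a b * Xinf b + A b a * Xinf a := by
          have h1' := mul_nonneg (hoff a b hab) (hXinf b).le
          have h2' := mul_pos hA (hXinf a)
          linarith
        have hsq : (v a - v b) ^ 2 = 0 := by
          rcases mul_eq_zero.mp h0 with h' | h'
          · exact absurd h' hc.ne'
          · exact h'
        have := pow_eq_zero_iff (n := 2) (by norm_num) |>.mp hsq
        linarith
      · exact absurd h hab
      · have h0 := h2 b a h
        have hc : 0 < A b a * Xinf a + A a b * Xinf b := by
          have h1' := mul_nonneg (hoff a b hab) (hXinf b).le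
          have h2' := mul_pos hA (hXinf a)
          linarith
        have hsq : (v b - v a) ^ 2 = 0 := by
          rcases mul_eq_zero.mp h0 with h' | h'
          · exact absurd h' hc.ne'
          · exact h'
        have := pow_eq_zero_iff (n := 2) (by norm_num) |>.mp hsq
        linarith
    have hrt := hconn x y
    induction hrt with
    | refl => rfl
    | tail hab hR ih => exact ih.trans (hstep _ _ hR.1 hR.2)
  have hDcont : Continuous D := by
    apply continuous_finset_sum; intro i _
    apply continuous_finset_sum; intro j _
    exact continuous_const.mul (((continuous_apply i).sub (continuous_apply j)).pow 2)
  have hL : Continuous (fun v : Fin N → ℝ => ∑ i, Xinf i * v i) :=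
    continuous_finset_sum _ fun i _ => continuous_const.mul (continuous_apply i)
  have hQ : Continuous (fun v : Fin N → ℝ => ∑ i, Xinf i * v i ^ 2) :=
    continuous_finset_sum _ fun i _ => continuous_const.mul ((continuous_apply i).pow 2)
  set S : Set (Fin N → ℝ) :=
    {v | (∑ i, Xinf i * v i = 0) ∧ ∑ i, Xinf i * v i ^ 2 = 1} with hSdef
  have hSclosed : IsClosed S := by
    have hset : S = (fun v : Fin N → ℝ => ∑ i, Xinf i * v i) ⁻¹' {0} ∩
        (fun v : Fin N → ℝ => ∑ i, Xinf i * v i ^ 2) ⁻¹' {1} := by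
      ext v; simp [hSdef, Set.mem_preimage]
    rw [hset]
    exact (isClosed_singleton.preimage hL).inter (isClosed_singleton.preimage hQ)
  have hSbdd : Bornology.IsBounded S := by
    apply isBounded_iff_forall_norm_le.mpr
    refine ⟨Real.sqrt (∑ i, 1 / Xinf i), ?_⟩
    intro v hv
    apply pi_norm_le_iff_of_nonneg (Real.sqrt_nonneg _) |>.mpr
    intro i
    have h1 : Xinf i * v i ^ 2 ≤ 1 := by
      have := Finset.single_le_sum
        (f := fun i => Xinf i * v i ^ 2)
        (fun j _ => mul_nonneg (hXinf j).le (sq_nonneg _)) (mem_univ i)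
      rw [hv.2] at this
      exact this
    have h2 : v i ^ 2 ≤ 1 / Xinf i := by
      rw [le_div_iff₀ (hXinf i)]
      nlinarith [hXinf i]
    have h3 : 1 / Xinf i ≤ ∑ j, 1 / Xinf j :=
      Finset.single_le_sum (f := fun j => 1 / Xinf j)
        (fun j _ => div_nonneg zero_le_one (hXinf j).le) (mem_univ i)
    have h4 : v i ^ 2 ≤ ∑ j, 1 / Xinf j := h2.trans h3
    have h5 : Real.sqrt (v i ^ 2) ≤ Real.sqrt (∑ j, 1 / Xinf j) := Real.sqrt_le_sqrt h4
    rw [Real.sqrt_sq_eq_abs] at h5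
    simpa [Real.norm_eq_abs] using h5
  have hs_eq : ∀ w : Fin N → ℝ,
      ∑ i, (w i) ^ 2 / Xinf i = ∑ i, Xinf i * (w i / Xinf i) ^ 2 := by
    intro w; apply Finset.sum_congr rfl; intro i _
    have hne := (hXinf i).ne'
    field_simp
  have hsnonneg : ∀ w : Fin N → ℝ, 0 ≤ ∑ i, (w i) ^ 2 / Xinf i :=
    fun w => Finset.sum_nonneg fun i _ => div_nonneg (sq_nonneg _) (hXinf i).le
  have hmemS : ∀ w : Fin N → ℝ, ∑ i, w i = 0 → 0 < ∑ i, (w i) ^ 2 / Xinf i →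
      (fun i => w i / Xinf i / Real.sqrt (∑ i, (w i) ^ 2 / Xinf i)) ∈ S := by
    intro w hw hs
    have ht : 0 < Real.sqrt (∑ i, (w i) ^ 2 / Xinf i) := Real.sqrt_pos.mpr hs
    constructor
    · have h1 : ∑ i, Xinf i * (w i / Xinf i / Real.sqrt (∑ i, (w i) ^ 2 / Xinf i))
          = (∑ i, w i) / Real.sqrt (∑ i, (w i) ^ 2 / Xinf i) := by
        rw [Finset.sum_div]
        apply Finset.sum_congr rfl; intro i _
        rw [div_div]
        have hne := (hXinf i).ne'
        have hne2 := ht.ne'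
        field_simp
      rw [h1, hw, zero_div]
    · have h1 : ∑ i, Xinf i * (w i / Xinf i / Real.sqrt (∑ i, (w i) ^ 2 / Xinf i)) ^ 2
          = (∑ i, Xinf i * (w i / Xinf i) ^ 2) /
              Real.sqrt (∑ i, (w i) ^ 2 / Xinf i) ^ 2 := by
        rw [Finset.sum_div]
        apply Finset.sum_congr rfl; intro i _
        rw [div_pow, mul_div_assoc]
      rw [h1, ← hs_eq w, Real.sq_sqrt (hsnonneg w), div_self hs.ne']
  have hDscale : ∀ (v : Fin N → ℝ) (t : ℝ), t ≠ 0 →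
      D v = t ^ 2 * D (fun i => v i / t) := by
    intro v t ht
    simp only [hDdef]
    rw [Finset.mul_sum]
    apply Finset.sum_congr rfl; intro i _
    rw [Finset.mul_sum]
    apply Finset.sum_congr rfl; intro j _
    have hvt : v i - v j = t * (v i / t - v j / t) := by field_simp
    rw [hvt]; ring
  by_cases hS : S.Nonempty
  · obtain ⟨v₀, hv₀, hmin⟩ :=
      (Metric.isCompact_of_isClosed_isBounded hSclosed hSbdd).exists_isMinOn hS
        hDcont.continuousOn
    refine ⟨D v₀, ?_, ?_⟩
    · rcases (hDnonneg v₀).lt_or_eq with h | h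
      · exact h
      · exfalso
        have hconst := hDconst v₀ h.symm
        obtain ⟨i₀, -, -⟩ :=
          Finset.exists_ne_zero_of_sum_ne_zero (hv₀.2.trans_ne one_ne_zero)
        have hall : ∀ i, v₀ i = v₀ i₀ := fun i => hconst i i₀
        have hsum : (∑ i, Xinf i) * v₀ i₀ = 0 := by
          rw [Finset.sum_mul, ← hv₀.1]
          exact Finset.sum_congr rfl fun i _ => by rw [hall i]
        have hpos : 0 < ∑ i, Xinf i :=
          Finset.sum_pos (fun i _ => hXinf i) ⟨i₀, mem_univ i₀⟩
        have hz : v₀ i₀ = 0 := by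
          rcases mul_eq_zero.mp hsum with h' | h'
          · exact absurd h' hpos.ne'
          · exact h'
        have hone : (1 : ℝ) = 0 := by
          rw [← hv₀.2]
          apply Finset.sum_eq_zero; intro i _
          rw [hall i, hz]; ring
        norm_num at hone
    · intro w hw
      rcases (hsnonneg w).eq_or_lt with hs | hs
      · rw [← hs, mul_zero]
        exact hDnonneg (fun i => w i / Xinf i)
      · have ht : 0 < Real.sqrt (∑ i, (w i) ^ 2 / Xinf i) := Real.sqrt_pos.mpr hs
        have hmem := hmemS w hw hs
        have h1 : D v₀ ≤ D (fun i => w i / Xinf i / Real.sqrt (∑ i, (w i) ^ 2 / Xinf i)) :=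
          isMinOn_iff.mp hmin _ hmem
        have h2 : D (fun i => w i / Xinf i) =
            Real.sqrt (∑ i, (w i) ^ 2 / Xinf i) ^ 2 *
              D (fun i => w i / Xinf i / Real.sqrt (∑ i, (w i) ^ 2 / Xinf i)) :=
          hDscale _ _ ht.ne'
        have h3 : Real.sqrt (∑ i, (w i) ^ 2 / Xinf i) ^ 2 = ∑ i, (w i) ^ 2 / Xinf i :=
          Real.sq_sqrt (hsnonneg w)
        show D (fun i => w i / Xinf i) ≥ D v₀ * ∑ i, (w i) ^ 2 / Xinf i
        rw [h2, h3]
        nlinarith [mul_le_mul_of_nonneg_left h1 (hsnonneg w)]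
  · refine ⟨1, one_pos, ?_⟩
    intro w hw
    have hs : ∑ i, (w i) ^ 2 / Xinf i = 0 := by
      rcases (hsnonneg w).eq_or_lt with h | h
      · exact h.symm
      · exact absurd ⟨_, hmemS w hw h⟩ hS
    rw [hs, mul_zero]
    exact hDnonneg (fun i => w i / Xinf i)
end
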